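/- The growth function of tree automorphisms satisfies Γ_{α^{-1}} = Γ_α and Γ_{αβ}(n) ≤ Γ_α(n) + Γ_β(n) for all α, β ∈ Aut(T(X)) and all n; consequently, for every d ≥ −1 the set B_d of automorphisms whose growth function is bounded above by a polynomial of degree d forms a subgroup of Aut(T(X)). -/

import Mathlib

open List

/-! ### The automorphism group of the rooted tree `T(X)` -/

/-- A permutation of the vertex set `X*` of the rooted tree `T(X)` is a tree
automorphism iff it preserves the length of words and the prefix relation. -/
def IsTreeAut {X : Type*} (f : Equiv.Perm (List X)) : Prop :=
  (∀ w : List X, (f w).length = w.length) ∧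
    ∀ u v : List X, u <+: v → f u <+: f v

/-- The automorphism group `Aut(T(X))` of the rooted tree `T(X)`, realized as a
subgroup of the permutation group of the vertex set `X*`. -/
def treeAut (X : Type*) : Subgroup (Equiv.Perm (List X)) where
  carrier := {f | IsTreeAut f}
  one_mem' := ⟨fun _ => rfl, fun _ _ h => h⟩
  mul_mem' := by
    rintro f g ⟨hf1, hf2⟩ ⟨hg1, hg2⟩
    refine ⟨fun w => ?_, fun u v h => ?_⟩
    · simp only [Equiv.Perm.coe_mul, Function.comp_apply]
      rw [hf1, hg1]
    · simpa using hf2 _ _ (hg2 _ _ h)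
  inv_mem' := by
    rintro f ⟨hf1, hf2⟩
    have hlen : ∀ w : List X, (f⁻¹ w).length = w.length := by
      intro w
      have h := hf1 (f⁻¹ w)
      rw [show ∀ x, f (f⁻¹ x) = x from f.apply_symm_apply] at h
      exact h.symm
    refine ⟨hlen, fun u v h => ?_⟩
    set t := (f⁻¹ v).take (f⁻¹ u).length with ht
    have htp : t <+: f⁻¹ v := take_prefix _ _
    have h2 : f t <+: v := by
      have := hf2 _ _ htp
      rwa [show ∀ x, f (f⁻¹ x) = x from f.apply_symm_apply] at this
    have hlt : (f t).length = u.length := by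
      rw [hf1, ht, length_take, hlen, hlen]
      exact min_eq_left h.length_le
    have hfu : f t = u :=
      (prefix_of_prefix_length_le h2 h hlt.le).eq_of_length hlt
    have : t = f⁻¹ u := by
      rw [← hfu, show ∀ x, f⁻¹ (f x) = x from f.symm_apply_apply]
    rwa [this] at htp

lemma mem_treeAut {X : Type*} {f : Equiv.Perm (List X)} :
    f ∈ treeAut X ↔ IsTreeAut f := Iff.rfl

/-! ### States, automatic and bounded automorphisms -/

/-- The state (section/restriction) of `f` at the vertex `w` of the tree:
`f (w ++ v) = f w ++ state f w v` for a tree automorphism `f`. -/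
def state {X : Type*} (f : List X → List X) (w : List X) : List X → List X :=
  fun v => (f (w ++ v)).drop w.length

/-- An endomorphism of `X*` is automatic if it has only finitely many states. -/
def IsAutomatic {X : Type*} (f : List X → List X) : Prop :=
  (Set.range fun w : List X => state f w).Finite

/-- An endomorphism of `X*` is bounded if the number of words of length `n`
with non-trivial state is bounded uniformly in `n`. -/
def IsBounded {X : Type*} (f : List X → List X) : Prop :=
  ∃ C : ℕ, ∀ n : ℕ,
    {w : List X | w.length = n ∧ state f w ≠ id}.ncard ≤ C

lemma IsTreeAut.apply_append {X : Type*} {f : Equiv.Perm (List X)}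
    (hf : IsTreeAut f) (w v : List X) :
    f (w ++ v) = f w ++ state (⇑f) w v := by
  obtain ⟨t, ht⟩ := hf.2 w (w ++ v) (prefix_append w v)
  have hl : (f w).length = w.length := hf.1 w
  have hst : state (⇑f) w v = t := by
    unfold state
    rw [← ht, ← hl, List.drop_left]
  rw [hst, ht]

lemma state_one {X : Type*} (w : List X) :
    state (⇑(1 : Equiv.Perm (List X))) w = id := by
  funext v
  simp [state]

lemma state_mul {X : Type*} {f g : Equiv.Perm (List X)}
    (hf : IsTreeAut f) (hg : IsTreeAut g) (w : List X) :
    state (⇑(f * g)) w = state (⇑f) (g w) ∘ state (⇑g) w := by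
  funext v
  have h1 : (⇑(f * g)) (w ++ v) = f (g (w ++ v)) := rfl
  show ((f * g) (w ++ v)).drop w.length = _
  rw [h1, hg.apply_append, hf.apply_append]
  have hl : (f (g w)).length = w.length := by rw [hf.1, hg.1]
  rw [← hl, List.drop_left]
  rfl

lemma state_inv_comp {X : Type*} {f : Equiv.Perm (List X)}
    (hf : IsTreeAut f) (hfi : IsTreeAut f⁻¹) (u : List X) :
    state (⇑f⁻¹) u ∘ state (⇑f) (f⁻¹ u) = id ∧
      state (⇑f) (f⁻¹ u) ∘ state (⇑f⁻¹) u = id := by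
  constructor
  · funext v
    have h1 : f (f⁻¹ u ++ v) = u ++ state (⇑f) (f⁻¹ u) v := by
      rw [hf.apply_append, show ∀ x, f (f⁻¹ x) = x from f.apply_symm_apply]
    have h2 : f⁻¹ (u ++ state (⇑f) (f⁻¹ u) v)
        = f⁻¹ u ++ state (⇑f⁻¹) u (state (⇑f) (f⁻¹ u) v) := hfi.apply_append _ _
    rw [← h1, show ∀ x, f⁻¹ (f x) = x from f.symm_apply_apply] at h2
    simp only [Function.comp_apply, id_eq]
    exact (List.append_cancel_left h2).symm
  · funext v
    have h1 : f⁻¹ (u ++ v) = f⁻¹ u ++ state (⇑f⁻¹) u v := hfi.apply_append _ _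
    have h2 : f (f⁻¹ u ++ state (⇑f⁻¹) u v)
        = f (f⁻¹ u) ++ state (⇑f) (f⁻¹ u) (state (⇑f⁻¹) u v) := hf.apply_append _ _
    rw [← h1, show ∀ x, f (f⁻¹ x) = x from f.apply_symm_apply, show ∀ x, f (f⁻¹ x) = x from f.apply_symm_apply] at h2
    simp only [Function.comp_apply, id_eq]
    exact (List.append_cancel_left h2).symm

/-- The growth function `Γ_α(n) = |{w ∈ X^n : α_w ≠ 1}|` of an endomorphism of
`X*`. -/
noncomputable def growth {X : Type*} (f : List X → List X) (n : ℕ) : ℕ :=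
  {w : List X | w.length = n ∧ state f w ≠ id}.ncard

/-- The class `B_d` of tree automorphisms whose growth function is bounded by
a polynomial of degree `d`; for `d = -1` these are the finitary automorphisms
(growth eventually `0`). -/
def growthClass (X : Type*) (d : ℤ) : Set (Equiv.Perm (List X)) :=
  {α | α ∈ treeAut X ∧
    if d < 0 then ∃ n₀ : ℕ, ∀ n : ℕ, n₀ ≤ n → growth ⇑α n = 0
    else ∃ C : ℕ, ∀ n : ℕ, 1 ≤ n → growth ⇑α n ≤ C * n ^ d.toNat}

/-!
The state of `αβ` at `w` is `α_{β(w)} ∘ β_w`, so it can be non-trivial only where `β_w ≠ 1` or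
`α_{β(w)} ≠ 1`; as `β` permutes `X^n`, the second set has `Γ_α(n)` elements. Likewise
`(α⁻¹)_u` is the inverse of `α_{α⁻¹(u)}`, so `α` maps the non-trivial states of `α` at level `n`
bijectively onto those of `α⁻¹`. Each class `B_d` is cut out by a growth condition that holds for
`0` and for every function bounded by a sum of two functions satisfying it.
-/

section Growth

variable {X : Type*}

lemma ncard_setOf_state_comp_ne_id (f : List X → List X) {g : Equiv.Perm (List X)}
    (hg : g ∈ treeAut X) (n : ℕ) :
    {w : List X | w.length = n ∧ state f (g w) ≠ id}.ncard = growth f n := by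
  have hpre : {w : List X | w.length = n ∧ state f (g w) ≠ id} =
      ⇑g ⁻¹' {w : List X | w.length = n ∧ state f w ≠ id} := by
    ext w
    simp only [Set.mem_ofPred_eq, Set.mem_preimage, hg.1 w]
  rw [hpre, Set.ncard_preimage_of_injective_subset_range g.injective
    (by simp [g.surjective.range_eq])]
  rfl

lemma state_inv_eq_id_iff {f : Equiv.Perm (List X)} (hf : f ∈ treeAut X) (u : List X) :
    state (⇑f⁻¹) u = id ↔ state (⇑f) (f⁻¹ u) = id := by
  obtain ⟨hleft, hright⟩ := state_inv_comp hf ((treeAut X).inv_mem hf) u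
  constructor <;> intro h
  · rwa [h, Function.comp_id] at hright
  · rwa [h, Function.comp_id] at hleft

lemma growth_inv {f : Equiv.Perm (List X)} (hf : f ∈ treeAut X) :
    growth (⇑f⁻¹) = growth ⇑f := by
  funext n
  rw [← ncard_setOf_state_comp_ne_id (⇑f) ((treeAut X).inv_mem hf) n]
  simp only [growth, ne_eq, state_inv_eq_id_iff hf]

lemma growth_mul_le [Finite X] {f g : Equiv.Perm (List X)} (hf : f ∈ treeAut X)
    (hg : g ∈ treeAut X) (n : ℕ) :
    growth (⇑(f * g)) n ≤ growth ⇑f n + growth ⇑g n := by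
  set S := {w : List X | w.length = n ∧ state (⇑f) (g w) ≠ id}
  set T := {w : List X | w.length = n ∧ state (⇑g) w ≠ id}
  have hsub : {w : List X | w.length = n ∧ state (⇑(f * g)) w ≠ id} ⊆ S ∪ T := by
    rintro w ⟨hl, hs⟩
    rw [state_mul hf hg] at hs
    by_contra h
    simp only [S, T, Set.mem_union, Set.mem_ofPred_eq, not_or, not_and, not_not] at h
    exact hs (by rw [h.1 hl, h.2 hl]; rfl)
  have hfin : (S ∪ T).Finite :=
    (List.finite_length_eq X n).subset (by rintro w (h | h) <;> exact h.1)
  calc growth (⇑(f * g)) n ≤ (S ∪ T).ncard := Set.ncard_le_ncard hsub hfin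
    _ ≤ S.ncard + T.ncard := Set.ncard_union_le S T
    _ = growth ⇑f n + growth ⇑g n := by rw [ncard_setOf_state_comp_ne_id _ hg]; rfl

lemma growth_one (n : ℕ) : growth (⇑(1 : Equiv.Perm (List X))) n = 0 := by
  simp only [growth, state_one, ne_eq, not_true_eq_false, and_false, Set.ofPred_false,
    Set.ncard_empty]

end Growth

/-- `growthClass X d` is by definition `{α ∈ treeAut X | IsGrowthBounded d (growth α)}`. -/
def IsGrowthBounded (d : ℤ) (γ : ℕ → ℕ) : Prop :=
  if d < 0 then ∃ n₀ : ℕ, ∀ n : ℕ, n₀ ≤ n → γ n = 0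
  else ∃ C : ℕ, ∀ n : ℕ, 1 ≤ n → γ n ≤ C * n ^ d.toNat

lemma isGrowthBounded_zero (d : ℤ) : IsGrowthBounded d 0 := by
  unfold IsGrowthBounded
  split_ifs <;> exact ⟨0, by simp⟩

lemma IsGrowthBounded.of_le_add {d : ℤ} {γ γ₁ γ₂ : ℕ → ℕ} (h₁ : IsGrowthBounded d γ₁)
    (h₂ : IsGrowthBounded d γ₂) (h : ∀ n, γ n ≤ γ₁ n + γ₂ n) : IsGrowthBounded d γ := by
  unfold IsGrowthBounded at *
  split_ifs at h₁ h₂ ⊢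
  · obtain ⟨n₁, h₁⟩ := h₁
    obtain ⟨n₂, h₂⟩ := h₂
    refine ⟨max n₁ n₂, fun n hn => ?_⟩
    have := h n
    rw [h₁ n (le_of_max_le_left hn), h₂ n (le_of_max_le_right hn)] at this
    omega
  · obtain ⟨C₁, h₁⟩ := h₁
    obtain ⟨C₂, h₂⟩ := h₂
    exact ⟨C₁ + C₂, fun n hn => (h n).trans (by
      rw [add_mul]; exact add_le_add (h₁ n hn) (h₂ n hn))⟩

def growthSubgroup (X : Type*) [Finite X] (d : ℤ) : Subgroup (Equiv.Perm (List X)) where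
  carrier := growthClass X d
  one_mem' := ⟨(treeAut X).one_mem, by
    show IsGrowthBounded d (growth _)
    rw [funext growth_one]
    exact isGrowthBounded_zero d⟩
  mul_mem' := fun ⟨hf, hfd⟩ ⟨hg, hgd⟩ =>
    ⟨(treeAut X).mul_mem hf hg, IsGrowthBounded.of_le_add hfd hgd (growth_mul_le hf hg)⟩
  inv_mem' := fun ⟨hf, hfd⟩ => ⟨(treeAut X).inv_mem hf, by rwa [growth_inv hf]⟩

/-- The growth function is symmetric and subadditive, and consequently, for
every `d ≥ -1`, the class `B_d` forms a subgroup of `Aut(T(X))`. -/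
theorem growth_symm_subadd_and_subgroup (X : Type*) [Finite X] :
    (∀ α : Equiv.Perm (List X), α ∈ treeAut X → growth (⇑α⁻¹) = growth ⇑α) ∧
    (∀ α β : Equiv.Perm (List X), α ∈ treeAut X → β ∈ treeAut X →
      ∀ n : ℕ, growth (⇑(α * β)) n ≤ growth ⇑α n + growth ⇑β n) ∧
    (∀ d : ℤ, -1 ≤ d → ∃ H : Subgroup (Equiv.Perm (List X)),
      (H : Set (Equiv.Perm (List X))) = growthClass X d) :=
  ⟨fun _ hα => growth_inv hα, fun _ _ hα hβ => growth_mul_le hα hβ,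
    fun d _ => ⟨growthSubgroup X d, rfl⟩⟩
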